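/- arXiv:1810.11888 — 3 statements merged into one kernel-verified Lean document; each statement's English description precedes it below -/
import Mathlib

section
/- Let K be a set of keys, let Hash be a set of hash values containing a distinguished element ⊥, and let H : K × List Hash → Hash and Hm : K × Msg → Hash be arbitrary functions (a keyed hash applied to node lists and to messages, respectively). For a key k and a message vector M = [m_1,…,m_n] with n ≥ 1, let l be the least natural number with n ≤ 2^l, and define the Merkle hash tree (h_{i,j}) for 0 ≤ i ≤ l, 0 ≤ j < 2^i by: h_{l,j} = Hm(k, m_{j+1}) for 0 ≤ j < n, h_{l,j} = ⊥ for n ≤ j < 2^l, and h_{i,j} = H(k, [h_{i+1,2j}, h_{i+1,2j+1}]) for 0 ≤ i < l; the commitment is c = H(k, [l, h_{0,0}]). The opening for index i ∈ {1,…,n} is the sibling path d = [g_1,…,g_l] where, setting a_l = i−1 and a_{j−1} = ⌊a_j/2⌋, one puts g_j = h_{j, a_j + 2(a_j mod 2) − 1}. Verification of (m, c, d, i) recomputes h_l = Hm(k, m) and, for j = l down to 1, sets h_{j−1} = H(k, [h_j, g_j]) if a_j is even and h_{j−1} = H(k, [g_j, h_j]) if a_j is odd, and accepts iff H(k, [l,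 h_0]) = c. Then for every n ≥ 1, every message vector M of length n, every key k, and every index i ∈ {1,…,n}, verification of (M_i, c, d, i) with c the commitment to M and d the opening for index i accepts. -/
/-!
Correctness of the Merkle hash-tree vector commitment scheme (Construction 1).

`H : K → List Hash → Hash` and `Hm : K → Msg → Hash` are arbitrary functions
(a keyed hash applied to lists of node hashes, resp. to messages), `bot` is the
distinguished element `⊥` of `Hash`, and `enc : ℕ → Hash` is an arbitrary
encoding of naturals into hash values (used to hash the depth `l` together with
the root, as in `c = H(k, [l, h_{0,0}])`).

`MerkleNode H Hm bot k M d j` is the tree node `h_{l-d, j}` of the paper, i.e.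
the node at height `d` above the leaves, position `j` (root at level `0`,
leaves at level `l`).

The sibling index of a position `a` (written `a + 2(a mod 2) - 1` in the paper,
i.e. the other child of the same parent `⌊a/2⌋`) is `a + 1` for even `a` and
`a - 1` for odd `a`.
-/

/-- The Merkle hash tree: `MerkleNode H Hm bot k M d j = h_{l-d, j}`, where
leaves (`d = 0`) are `Hm k m_{j+1}` for `j < n` and `⊥` otherwise, and inner
nodes hash the pair of their children. -/
def MerkleNode {K Msg Hash : Type} (H : K → List Hash → Hash) (Hm : K → Msg → Hash)
    (bot : Hash) (k : K) (M : List Msg) : ℕ → ℕ → Hash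
  | 0, j => if h : j < M.length then Hm k (M.get ⟨j, h⟩) else bot
  | d + 1, j =>
      H k [MerkleNode H Hm bot k M d (2 * j), MerkleNode H Hm bot k M d (2 * j + 1)]

/-- The sibling index `a + 2(a mod 2) - 1`: the other child of the parent
`⌊a/2⌋`, i.e. `a + 1` if `a` is even and `a - 1` if `a` is odd. -/
def sibling (a : ℕ) : ℕ := if a % 2 = 0 then a + 1 else a - 1

/-- The commitment `c = H(k, [l, h_{0,0}])`. -/
def MerkleCommit {K Msg Hash : Type} (H : K → List Hash → Hash) (Hm : K → Msg → Hash)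
    (bot : Hash) (enc : ℕ → Hash) (k : K) (M : List Msg) (l : ℕ) : Hash :=
  H k [enc l, MerkleNode H Hm bot k M l 0]

/-- The opening `d = [g_1, …, g_l]` for the (1-based) index `i`:
`g_j = h_{j, sibling a_j}`, where `a_j = ⌊(i-1) / 2^(l-j)⌋` (i.e. `a_l = i - 1`
and `a_{j-1} = ⌊a_j / 2⌋`). -/
def MerkleOpen {K Msg Hash : Type} (H : K → List Hash → Hash) (Hm : K → Msg → Hash)
    (bot : Hash) (k : K) (M : List Msg) (l : ℕ) (i : ℕ) : List Hash :=
  (List.range l).map fun t =>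
    MerkleNode H Hm bot k M (l - (t + 1)) (sibling ((i - 1) / 2 ^ (l - (t + 1))))

/-- Root recomputation for verification: starting from `h_l = Hm k m` and
`a_l = i - 1`, process the sibling hashes `g_l, g_{l-1}, …, g_1` (the reversed
opening), setting `h_{j-1} = H(k, [h_j, g_j])` if `a_j` is even and
`h_{j-1} = H(k, [g_j, h_j])` if `a_j` is odd, and `a_{j-1} = ⌊a_j / 2⌋`. -/
def MerkleChain {K Hash : Type} (H : K → List Hash → Hash) (k : K) :
    Hash → ℕ → List Hash → Hash
  | h, _, [] => h
  | h, a, g :: gs =>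
      MerkleChain H k (if a % 2 = 0 then H k [h, g] else H k [g, h]) (a / 2) gs

/-- Verification of `(m, c, d, i)`: recompute the root from `Hm k m` along the
sibling path `d` and accept iff `H(k, [l, h_0]) = c` (with `l = d.length`). -/
def MerkleVerify {K Msg Hash : Type} (H : K → List Hash → Hash) (Hm : K → Msg → Hash)
    (enc : ℕ → Hash) (k : K) (m : Msg) (c : Hash) (d : List Hash) (i : ℕ) : Prop :=
  H k [enc d.length, MerkleChain H k (Hm k m) (i - 1) d.reverse] = c

lemma node_step {K Msg Hash : Type} (H : K → List Hash → Hash) (Hm : K → Msg → Hash)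
    (bot : Hash) (k : K) (M : List Msg) (d a : ℕ) :
    (if a % 2 = 0 then H k [MerkleNode H Hm bot k M d a, MerkleNode H Hm bot k M d (sibling a)]
     else H k [MerkleNode H Hm bot k M d (sibling a), MerkleNode H Hm bot k M d a])
      = MerkleNode H Hm bot k M (d + 1) (a / 2) := by
  rcases Nat.mod_two_eq_zero_or_one a with h | h
  · have h1 : 2 * (a / 2) = a := by omega
    have h2 : sibling a = a + 1 := by simp [sibling, h]
    simp [MerkleNode, h, h1, h2]
  · have h1 : 2 * (a / 2) + 1 = a := by omega
    have h2 : sibling a = 2 * (a / 2) := by simp [sibling, h]; omega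
    simp [MerkleNode, h, h2, h1]

lemma chain_eq {K Msg Hash : Type} (H : K → List Hash → Hash) (Hm : K → Msg → Hash)
    (bot : Hash) (k : K) (M : List Msg) :
    ∀ (l d a : ℕ), MerkleChain H k (MerkleNode H Hm bot k M d a) a
      ((List.range l).map fun s => MerkleNode H Hm bot k M (d + s) (sibling (a / 2 ^ s)))
      = MerkleNode H Hm bot k M (d + l) (a / 2 ^ l)
  | 0, d, a => by simp [MerkleChain]
  | l + 1, d, a => by
    rw [List.range_succ_eq_map]
    simp only [List.map_cons, List.map_map, MerkleChain, pow_zero, Nat.div_one, Nat.add_zero]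
    rw [node_step]
    have := chain_eq H Hm bot k M l (d + 1) (a / 2)
    have heq : ((List.range l).map fun s =>
        MerkleNode H Hm bot k M (d + 1 + s) (sibling (a / 2 / 2 ^ s)))
        = (List.range l).map ((fun s => MerkleNode H Hm bot k M (d + s) (sibling (a / 2 ^ s))) ∘ Nat.succ) := by
      apply List.map_congr_left
      intro s _
      simp [Function.comp, Nat.div_div_eq_div_mul, pow_succ, Nat.succ_eq_add_one]
      ring_nf
    rw [← heq, this]
    congr 1
    · omega
    · rw [Nat.div_div_eq_div_mul, pow_succ]; ring_nf

lemma open_reverse {K Msg Hash : Type} (H : K → List Hash → Hash) (Hm : K → Msg → Hash)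
    (bot : Hash) (k : K) (M : List Msg) (l i : ℕ) :
    (MerkleOpen H Hm bot k M l i).reverse
      = (List.range l).map fun s => MerkleNode H Hm bot k M s (sibling ((i - 1) / 2 ^ s)) := by
  apply List.ext_getElem
  · simp [MerkleOpen]
  · intro j h1 h2
    have hj : j < l := by simpa [MerkleOpen] using h2
    simp only [MerkleOpen, List.getElem_reverse, List.getElem_map, List.getElem_range,
      List.length_map, List.length_range]
    have : l - (l - 1 - j + 1) = j := by omega
    rw [this]

/-- **Correctness of the Merkle hash-tree vector commitment (Construction 1).**
For every message vector `M` of length `n ≥ 1`, every key `k`, the least `l`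
with `n ≤ 2^l`, and every index `i ∈ {1, …, n}`, verification of
`(M_i, c, d, i)` accepts, where `c` is the commitment to `M` and `d` is the
opening for index `i`. -/
theorem merkle_vector_commitment_correct
    {K Msg Hash : Type} (bot : Hash)
    (H : K → List Hash → Hash) (Hm : K → Msg → Hash) (enc : ℕ → Hash)
    (k : K) (M : List Msg) (hn : 1 ≤ M.length)
    (l : ℕ) (hl : M.length ≤ 2 ^ l) (hleast : ∀ l', M.length ≤ 2 ^ l' → l ≤ l')
    (i : ℕ) (hi1 : 1 ≤ i) (hin : i ≤ M.length) (him : i - 1 < M.length) :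
    MerkleVerify H Hm enc k (M.get ⟨i - 1, him⟩)
      (MerkleCommit H Hm bot enc k M l) (MerkleOpen H Hm bot k M l i) i := by
  unfold MerkleVerify MerkleCommit
  rw [open_reverse]
  have hleaf : Hm k (M.get ⟨i - 1, him⟩) = MerkleNode H Hm bot k M 0 (i - 1) := by
    simp [MerkleNode, him]
  rw [hleaf]
  have := chain_eq H Hm bot k M l 0 (i - 1)
  simp only [Nat.zero_add] at this
  rw [this]
  have hdiv : (i - 1) / 2 ^ l = 0 := Nat.div_eq_of_lt (by omega)
  rw [hdiv]
  congr 1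
  simp [MerkleOpen]
end

section
/- With the Merkle hash tree (h_{i,j})_{0 ≤ i ≤ l, 0 ≤ j < 2^i} built from a message vector M of length n (1 ≤ n ≤ 2^l) under key k as in Construction 1, fix an index i ∈ {1,…,n} and let a_l = i−1, a_{j−1} = ⌊a_j/2⌋, and g_j = h_{j, a_j + 2(a_j mod 2) − 1} for j = l,…,1. Define the recomputed hashes by h'_l = Hm(k, M_i) and, for j = l down to 1, h'_{j−1} = H(k, [h'_j, g_j]) if a_j is even and h'_{j−1} = H(k, [g_j, h'_j]) if a_j is odd. Then for every level j ∈ {0,…,l}, the recomputed hash satisfies h'_j = h_{j, a_j}; in particular h'_0 = h_{0,0}, the root of the tree. -/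
/-- The recomputed hashes: `MerkleRecompute H k g a start l s = h'_{l-s}`,
defined by `h'_l = start` and, for `j = l` down to `1`,
`h'_{j-1} = H(k, [h'_j, g_j])` if `a_j` is even and
`h'_{j-1} = H(k, [g_j, h'_j])` if `a_j` is odd. -/
def MerkleRecompute {K Hash : Type} (H : K → List Hash → Hash) (k : K)
    (g : ℕ → Hash) (a : ℕ → ℕ) (start : Hash) (l : ℕ) : ℕ → Hash
  | 0 => start
  | s + 1 =>
      if a (l - s) % 2 = 0 then
        H k [MerkleRecompute H k g a start l s, g (l - s)]
      else
        H k [g (l - s), MerkleRecompute H k g a start l s]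

/-- **Path-recomputation invariant (Construction 1).**
With the Merkle tree built from a message vector `M` of length `n`
(`1 ≤ n ≤ 2^l`) under key `k`, an index `i ∈ {1, …, n}`, the positions
`a_l = i - 1`, `a_{j-1} = ⌊a_j / 2⌋`, and the sibling hashes
`g_j = h_{j, sibling a_j}`, the recomputed hashes `h'_j` (starting from
`h'_l = Hm k M_i`) satisfy `h'_j = h_{j, a_j}` for every level `j ∈ {0, …, l}`;
in particular `h'_0 = h_{0,0}`, the root of the tree. -/
theorem merkle_path_recompute_invariant
    {K Msg Hash : Type} (bot : Hash)
    (H : K → List Hash → Hash) (Hm : K → Msg → Hash)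
    (k : K) (M : List Msg) (l : ℕ)
    (hn : 1 ≤ M.length) (hl : M.length ≤ 2 ^ l)
    (i : ℕ) (hi1 : 1 ≤ i) (hin : i ≤ M.length) (him : i - 1 < M.length)
    (a : ℕ → ℕ) (hal : a l = i - 1)
    (ha : ∀ j, 1 ≤ j → j ≤ l → a (j - 1) = a j / 2)
    (g : ℕ → Hash)
    (hg : ∀ j, 1 ≤ j → j ≤ l →
      g j = MerkleNode H Hm bot k M (l - j) (sibling (a j))) :
    (∀ j ≤ l,
      MerkleRecompute H k g a (Hm k (M.get ⟨i - 1, him⟩)) l (l - j)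
        = MerkleNode H Hm bot k M (l - j) (a j))
    ∧ MerkleRecompute H k g a (Hm k (M.get ⟨i - 1, him⟩)) l l
        = MerkleNode H Hm bot k M l 0 := by
  have ha' : ∀ s, s ≤ l → a (l - s) = (i - 1) / 2 ^ s := by
    intro s
    induction s with
    | zero => intro _; simpa using hal
    | succ s ih =>
      intro hs
      have hs' : s ≤ l := Nat.le_of_succ_le hs
      have h1 : 1 ≤ l - s := by omega
      have h2 : l - s ≤ l := Nat.sub_le _ _
      have heq := ha (l - s) h1 h2
      have hsub : l - s - 1 = l - (s + 1) := by omega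
      rw [hsub] at heq
      rw [heq, ih hs', Nat.div_div_eq_div_mul, ← pow_succ]
  have key : ∀ s, s ≤ l → MerkleRecompute H k g a (Hm k (M.get ⟨i - 1, him⟩)) l s
      = MerkleNode H Hm bot k M s (a (l - s)) := by
    intro s
    induction s with
    | zero =>
      intro _
      simp [MerkleRecompute, MerkleNode, hal, him]
    | succ s ih =>
      intro hs
      have hs' : s ≤ l := Nat.le_of_succ_le hs
      have h1 : 1 ≤ l - s := by omega
      have h2 : l - s ≤ l := Nat.sub_le _ _
      have hgeq := hg (l - s) h1 h2
      have hsub : l - (l - s) = s := by omega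
      rw [hsub] at hgeq
      have haeq := ha (l - s) h1 h2
      have hsub2 : l - s - 1 = l - (s + 1) := by omega
      rw [hsub2] at haeq
      rw [MerkleRecompute, MerkleNode, haeq, ih hs', hgeq]
      rcases Nat.even_or_odd (a (l - s)) with he | ho
      · have hm : a (l - s) % 2 = 0 := Nat.even_iff.mp he
        have h2j : 2 * (a (l - s) / 2) = a (l - s) := by omega
        simp [hm, sibling, h2j]
      · have hm : a (l - s) % 2 = 1 := Nat.odd_iff.mp ho
        have h2j : 2 * (a (l - s) / 2) = a (l - s) - 1 := by omega
        have h2j1 : 2 * (a (l - s) / 2) + 1 = a (l - s) := by omega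
        simp [hm, sibling, h2j, h2j1, show a (l - s) - 1 + 1 = a (l - s) by omega]
  constructor
  · intro j hj
    have := key (l - j) (Nat.sub_le _ _)
    rwa [show l - (l - j) = j by omega] at this
  · have hmain := key l le_rfl
    have ha0 : a 0 = 0 := by
      have h0 := ha' l le_rfl
      rw [Nat.sub_self] at h0
      rw [h0]
      exact Nat.div_eq_of_lt (by omega : i - 1 < 2 ^ l)
    rw [Nat.sub_self, ha0] at hmain
    exact hmain
end

section
/- Let COM be a commitment scheme with message space M such that for each key k_1 and message m, Commit_COM(k_1, m) is a PMF over pairs (c, d), and let C_{k_1}(m) denote the marginal distribution of the commitment component c. Assume COM is ε-statistically-hiding: for every key k_1 and all messages m_1, m_2, Δ(C_{k_1}(m_1), C_{k_1}(m_2)) ≤ ε, where Δ(A,B) := Σ_x |Pr_A(x) − Pr_B(x)|. Let VC be a vector commitment scheme with maximum vector length L whose Commit and Open algorithms are deterministic functions. Consider the composed scheme of Construction 2 with key k = (k_1, k_2): sample (c_i, d_i) ← Commit_COM(k_1, m_i) independently for each i ∈ {1,…,n}, compute (c, D') = Commit_VC(k_2, [c_1,…,c_n]), and for each i let the opening be (c_i,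 d_i, Open_VC(k_2, D', i)). For n ≤ L, I ⊆ {1,…,n}, a message vector M ∈ M^n and key k, let CD_k(M, I) denote the joint distribution of the commitment c together with the openings at all positions i ∈ I. Then for all n ≤ L, all I ⊆ {1,…,n}, all message vectors M_1, M_2 ∈ M^n with (M_1)_I = (M_2)_I, and every key k: Δ(CD_k(M_1, I), CD_k(M_2, I)) ≤ L·ε. -/
/-!
Hybrid argument. Hide the decommitment `dᵢ` at every position `i ∉ I`: the view
`CD_k(M, I)` is a deterministic function of the masked samples, which are independent
across positions. At a position in `I` the two message vectors agree, so the masked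
samples have the same law; at a position outside `I` the masked sample is a function of
`cᵢ` alone, so the laws are `ε`-close. Since the statistical distance does not grow under
post-processing and adds up along the independent coordinates, the views are `n·ε`-close.
-/

noncomputable def statDist {α : Type} (p q : PMF α) : ℝ :=
  ∑' x, |(p x).toReal - (q x).toReal|

noncomputable def pmfList {α : Type} : List (PMF α) → PMF (List α)
  | [] => PMF.pure []
  | p :: ps => p.bind fun x => (pmfList ps).map fun xs => x :: xs

/-- The selective-opening view `CD_k(M, I)` of the composed scheme: the joint
distribution of the vector commitment `c` together with the openings
`(cᵢ, dᵢ, Open_VC(k₂, D', i))` at all positions `i ∈ I`. -/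
noncomputable def selectiveOpeningView
    {Msg C D CC DD O : Type} [Inhabited C] [Inhabited D]
    (comCommit : Msg → PMF (C × D))
    (vcCommit : List C → CC × DD) (vcOpen : DD → ℕ → O)
    (M : List Msg) (I : Finset ℕ) :
    PMF (CC × (ℕ → Option ((C × D) × O))) :=
  (pmfList (M.map comCommit)).map fun cds =>
    ((vcCommit (cds.map Prod.fst)).1,
      fun i =>
        if i ∈ I then
          some (cds.getD (i - 1) default, vcOpen (vcCommit (cds.map Prod.fst)).2 i)
        else none)

open scoped ENNReal

section StatEDist

variable {α β : Type*}

lemma ENNReal.abs_toReal_sub_toReal {a b : ℝ≥0∞} (ha : a ≠ ∞) (hb : b ≠ ∞) :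
    |a.toReal - b.toReal| = ((a - b) + (b - a)).toReal := by
  rcases le_total a b with h | h
  · rw [tsub_eq_zero_of_le h, zero_add, ENNReal.toReal_sub_of_le h hb, abs_sub_comm,
      abs_of_nonneg (sub_nonneg.2 (ENNReal.toReal_mono hb h))]
  · rw [tsub_eq_zero_of_le h, add_zero, ENNReal.toReal_sub_of_le h ha,
      abs_of_nonneg (sub_nonneg.2 (ENNReal.toReal_mono ha h))]

lemma ENNReal.tsum_tsub_tsum_le (f g : α → ℝ≥0∞) :
    ∑' x, f x - ∑' x, g x ≤ ∑' x, (f x - g x) := by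
  rw [tsub_le_iff_right, ← ENNReal.tsum_add]
  exact ENNReal.tsum_le_tsum fun _ => le_tsub_add

/-- `statDist` computed in `ℝ≥0∞`, where `|a - b| = (a - b) + (b - a)` with truncated
subtraction. -/
noncomputable def statEDist (p q : PMF α) : ℝ≥0∞ :=
  ∑' x, ((p x - q x) + (q x - p x))

lemma statEDist_self (p : PMF α) : statEDist p p = 0 := by
  simp [statEDist]

lemma statEDist_le_two (p q : PMF α) : statEDist p q ≤ 2 :=
  calc statEDist p q ≤ ∑' x, (p x + q x) :=
        ENNReal.tsum_le_tsum fun _ => add_le_add tsub_le_self tsub_le_self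
    _ = 2 := by rw [ENNReal.tsum_add, p.tsum_coe, q.tsum_coe, one_add_one_eq_two]

lemma statEDist_ne_top (p q : PMF α) : statEDist p q ≠ ∞ :=
  ne_top_of_le_ne_top ENNReal.ofNat_ne_top (statEDist_le_two p q)

lemma statEDist_triangle (p q r : PMF α) :
    statEDist p r ≤ statEDist p q + statEDist q r := by
  rw [statEDist, statEDist, statEDist, ← ENNReal.tsum_add]
  refine ENNReal.tsum_le_tsum fun x => ?_
  calc (p x - r x) + (r x - p x)
      ≤ ((p x - q x) + (q x - r x)) + ((r x - q x) + (q x - p x)) :=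
        add_le_add tsub_le_tsub_add_tsub tsub_le_tsub_add_tsub
    _ = ((p x - q x) + (q x - p x)) + ((q x - r x) + (r x - q x)) := by ring

lemma statEDist_bind_le (p q : PMF α) (f : α → PMF β) :
    statEDist (p.bind f) (q.bind f) ≤ statEDist p q := by
  calc statEDist (p.bind f) (q.bind f)
      ≤ ∑' y, ∑' x, ((p x - q x) + (q x - p x)) * f x y := by
        refine ENNReal.tsum_le_tsum fun y => ?_
        simp only [PMF.bind_apply, add_mul, ENNReal.tsum_add]
        exact add_le_add
          ((ENNReal.tsum_tsub_tsum_le _ _).trans (ENNReal.tsum_le_tsum fun _ => le_tsub_mul))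
          ((ENNReal.tsum_tsub_tsum_le _ _).trans (ENNReal.tsum_le_tsum fun _ => le_tsub_mul))
    _ = statEDist p q := by
        rw [ENNReal.tsum_comm]
        simp only [ENNReal.tsum_mul_left, PMF.tsum_coe, mul_one, statEDist]

lemma statEDist_map_le (f : α → β) (p q : PMF α) :
    statEDist (p.map f) (q.map f) ≤ statEDist p q :=
  statEDist_bind_le p q (PMF.pure ∘ f)

lemma statEDist_bind_le_tsum (p : PMF α) (f g : α → PMF β) :
    statEDist (p.bind f) (p.bind g) ≤ ∑' x, p x * statEDist (f x) (g x) := by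
  calc statEDist (p.bind f) (p.bind g)
      ≤ ∑' y, ∑' x, p x * ((f x y - g x y) + (g x y - f x y)) := by
        refine ENNReal.tsum_le_tsum fun y => ?_
        simp only [PMF.bind_apply, mul_add, ENNReal.tsum_add]
        exact add_le_add
          ((ENNReal.tsum_tsub_tsum_le _ _).trans (ENNReal.tsum_le_tsum fun _ => le_mul_tsub))
          ((ENNReal.tsum_tsub_tsum_le _ _).trans (ENNReal.tsum_le_tsum fun _ => le_mul_tsub))
    _ = ∑' x, p x * statEDist (f x) (g x) := by
        rw [ENNReal.tsum_comm]
        simp only [ENNReal.tsum_mul_left, statEDist]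

lemma statEDist_bind_bind_le {p q : PMF α} {f g : α → PMF β} {c : ℝ≥0∞}
    (hfg : ∀ x, statEDist (f x) (g x) ≤ c) :
    statEDist (p.bind f) (q.bind g) ≤ statEDist p q + c :=
  calc statEDist (p.bind f) (q.bind g)
      ≤ statEDist (p.bind f) (q.bind f) + statEDist (q.bind f) (q.bind g) :=
        statEDist_triangle _ _ _
    _ ≤ statEDist p q + ∑' x, q x * c :=
        add_le_add (statEDist_bind_le p q f)
          ((statEDist_bind_le_tsum q f g).trans
            (ENNReal.tsum_le_tsum fun x => mul_le_mul_right (hfg x) _))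
    _ = statEDist p q + c := by rw [ENNReal.tsum_mul_right, q.tsum_coe, one_mul]

end StatEDist

section StatDist

variable {α : Type}

lemma statDist_eq_toReal_statEDist (p q : PMF α) :
    statDist p q = (statEDist p q).toReal := by
  rw [statEDist, ENNReal.tsum_toReal_eq fun x => ENNReal.add_ne_top.2
    ⟨ne_top_of_le_ne_top (p.apply_ne_top x) tsub_le_self,
      ne_top_of_le_ne_top (q.apply_ne_top x) tsub_le_self⟩]
  exact tsum_congr fun x => ENNReal.abs_toReal_sub_toReal (p.apply_ne_top x) (q.apply_ne_top x)

lemma statDist_nonneg (p q : PMF α) : 0 ≤ statDist p q :=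
  tsum_nonneg fun _ => abs_nonneg _

lemma ofReal_statDist (p q : PMF α) : ENNReal.ofReal (statDist p q) = statEDist p q := by
  rw [statDist_eq_toReal_statEDist, ENNReal.ofReal_toReal (statEDist_ne_top p q)]

lemma statDist_le_of_statEDist_le_ofReal {p q : PMF α} {r : ℝ}
    (h : statEDist p q ≤ ENNReal.ofReal r) (hr : 0 ≤ r) : statDist p q ≤ r := by
  rw [statDist_eq_toReal_statEDist]
  exact ENNReal.toReal_le_of_le_ofReal hr h

lemma statEDist_pmfList_le {ps qs : List (PMF α)} {c : ℝ≥0∞}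
    (h : List.Forall₂ (fun p q => statEDist p q ≤ c) ps qs) :
    statEDist (pmfList ps) (pmfList qs) ≤ ps.length * c := by
  induction h with
  | nil => simp [pmfList, statEDist_self]
  | @cons p q ps qs hpq _ ih =>
    calc statEDist (pmfList (p :: ps)) (pmfList (q :: qs))
        ≤ statEDist p q + statEDist (pmfList ps) (pmfList qs) :=
          statEDist_bind_bind_le fun _ => statEDist_map_le _ _ _
      _ ≤ c + ps.length * c := add_le_add hpq ih
      _ = (p :: ps).length * c := by
          rw [List.length_cons, Nat.cast_succ, add_mul, one_mul, add_comm]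

lemma pmfList_mapIdx_map {β : Type} (f : ℕ → α → β) (ps : List (PMF α)) :
    pmfList (ps.mapIdx fun j p => p.map (f j)) = (pmfList ps).map (List.mapIdx f) := by
  induction ps generalizing f with
  | nil => simp [pmfList, PMF.pure_map]
  | cons p ps ih =>
    simp only [List.mapIdx_cons, pmfList, ih, PMF.map_bind, PMF.bind_map, PMF.map_comp]
    congr 1
    funext x
    simp only [Function.comp_def, List.mapIdx_cons]

end StatDist

section Masking

variable {Msg C D CC DD O : Type}

/-- Keeps the decommitment of the sample at 0-based position `j` only if the 1-based index
`j + 1` is opened. -/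
def maskOpening (I : Finset ℕ) (j : ℕ) (cd : C × D) : C × Option D :=
  (cd.1, if j + 1 ∈ I then some cd.2 else none)

noncomputable def maskedView [Inhabited C] [Inhabited D]
    (vcCommit : List C → CC × DD) (vcOpen : DD → ℕ → O) (I : Finset ℕ)
    (ys : List (C × Option D)) : CC × (ℕ → Option ((C × D) × O)) :=
  ((vcCommit (ys.map Prod.fst)).1,
    fun i =>
      if i ∈ I then
        some (((ys.getD (i - 1) default).1, (ys.getD (i - 1) default).2.getD default),
          vcOpen (vcCommit (ys.map Prod.fst)).2 i)
      else none)

lemma map_fst_mapIdx_maskOpening (I : Finset ℕ) (cds : List (C × D)) :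
    (cds.mapIdx (maskOpening I)).map Prod.fst = cds.map Prod.fst :=
  List.ext_getElem (by simp) fun _ _ _ => by simp [maskOpening]

lemma getD_mapIdx_maskOpening [Inhabited C] [Inhabited D] {I : Finset ℕ} {i : ℕ}
    (hi : i ∈ I) (hi₁ : 1 ≤ i) (cds : List (C × D)) :
    (((cds.mapIdx (maskOpening I)).getD (i - 1) default).1,
      ((cds.mapIdx (maskOpening I)).getD (i - 1) default).2.getD default)
      = cds.getD (i - 1) default := by
  rcases lt_or_ge (i - 1) cds.length with h | h
  · have hi' : i - 1 + 1 ∈ I := by rwa [Nat.sub_add_cancel hi₁]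
    simp [h, maskOpening, hi']
  · rw [List.getD_eq_default _ _ h, List.getD_eq_default _ _ (by simpa using h)]
    rfl

lemma selectiveOpeningView_eq_map_maskedView [Inhabited C] [Inhabited D]
    (com : Msg → PMF (C × D)) (vcCommit : List C → CC × DD) (vcOpen : DD → ℕ → O)
    (M : List Msg) {I : Finset ℕ} (hI : ∀ i ∈ I, 1 ≤ i) :
    selectiveOpeningView com vcCommit vcOpen M I
      = (pmfList ((M.map com).mapIdx fun j p => p.map (maskOpening I j))).map
          (maskedView vcCommit vcOpen I) := by
  rw [pmfList_mapIdx_map, PMF.map_comp, selectiveOpeningView]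
  congr 1
  funext cds
  simp only [Function.comp_apply, maskedView, map_fst_mapIdx_maskOpening]
  congr 1
  funext i
  split_ifs with hi
  · rw [getD_mapIdx_maskOpening hi (hI i hi)]
  · rfl

lemma statEDist_map_maskOpening_le {com : Msg → PMF (C × D)} {c : ℝ≥0∞}
    (hc : ∀ m₁ m₂, statEDist ((com m₁).map Prod.fst) ((com m₂).map Prod.fst) ≤ c)
    (I : Finset ℕ) (j : ℕ) {m₁ m₂ : Msg} (hm : j + 1 ∈ I → m₁ = m₂) :
    statEDist ((com m₁).map (maskOpening I j)) ((com m₂).map (maskOpening I j)) ≤ c := by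
  by_cases hj : j + 1 ∈ I
  · rw [hm hj, statEDist_self]
    exact zero_le
  · have hmask : maskOpening I j = (fun x : C => (x, (none : Option D))) ∘ Prod.fst := by
      funext cd
      simp [maskOpening, hj]
    rw [hmask, ← PMF.map_comp, ← PMF.map_comp]
    exact (statEDist_map_le _ _ _).trans (hc m₁ m₂)

lemma forall₂_statEDist_masked_le [Inhabited Msg] {com : Msg → PMF (C × D)} {c : ℝ≥0∞}
    (hc : ∀ m₁ m₂, statEDist ((com m₁).map Prod.fst) ((com m₂).map Prod.fst) ≤ c)
    {I : Finset ℕ} {M₁ M₂ : List Msg} (hlen : M₁.length = M₂.length)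
    (hMI : ∀ i ∈ I, M₁.getD (i - 1) default = M₂.getD (i - 1) default) :
    List.Forall₂ (fun p q => statEDist p q ≤ c)
      ((M₁.map com).mapIdx fun j p => p.map (maskOpening I j))
      ((M₂.map com).mapIdx fun j p => p.map (maskOpening I j)) := by
  refine List.forall₂_iff_get.2 ⟨by simpa using hlen, fun j h₁ h₂ => ?_⟩
  simp only [List.get_eq_getElem, List.getElem_mapIdx, List.getElem_map]
  refine statEDist_map_maskOpening_le hc I j fun hj => ?_
  have h := hMI (j + 1) hj
  rwa [Nat.add_sub_cancel, List.getD_eq_getElem _ _ (by simpa using h₁),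
    List.getD_eq_getElem _ _ (by simpa using h₂)] at h

end Masking

/-- **Theorem 4: statistical hiding under selective opening.**
If `COM` is `ε`-statistically-hiding (for every key `k₁` and all messages
`m₁, m₂`, the commitment components satisfy `Δ(C_{k₁}(m₁), C_{k₁}(m₂)) ≤ ε`),
then for all `n ≤ L`, all `I ⊆ {1, …, n}`, all message vectors `M₁, M₂` of
length `n` with `(M₁)_I = (M₂)_I`, and every key `k = (k₁, k₂)`:
`Δ(CD_k(M₁, I), CD_k(M₂, I)) ≤ L·ε`. -/
theorem composed_scheme_statistically_hiding_under_selective_opening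
    {K₁ K₂ Msg C D CC DD O : Type} [Inhabited Msg] [Inhabited C] [Inhabited D]
    (comCommit : K₁ → Msg → PMF (C × D)) (ε : ℝ)
    -- `COM` is `ε`-statistically-hiding:
    (hCOM : ∀ (k₁ : K₁) (m₁ m₂ : Msg),
      statDist ((comCommit k₁ m₁).map Prod.fst) ((comCommit k₁ m₂).map Prod.fst) ≤ ε)
    (L : ℕ) (vcCommit : K₂ → List C → CC × DD) (vcOpen : K₂ → DD → ℕ → O)
    (n : ℕ) (hn : n ≤ L) (I : Finset ℕ) (hI : I ⊆ Finset.Icc 1 n)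
    (M₁ M₂ : List Msg) (hM₁ : M₁.length = n) (hM₂ : M₂.length = n)
    (hMI : ∀ i ∈ I, M₁.getD (i - 1) default = M₂.getD (i - 1) default)
    (k₁ : K₁) (k₂ : K₂) :
    statDist
      (selectiveOpeningView (comCommit k₁) (vcCommit k₂) (vcOpen k₂) M₁ I)
      (selectiveOpeningView (comCommit k₁) (vcCommit k₂) (vcOpen k₂) M₂ I)
    ≤ (L : ℝ) * ε := by
  have hI₁ : ∀ i ∈ I, 1 ≤ i := fun i hi => (Finset.mem_Icc.1 (hI hi)).1
  have hε : 0 ≤ ε := (statDist_nonneg _ _).trans (hCOM k₁ default default)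
  have hc : ∀ m₁ m₂, statEDist ((comCommit k₁ m₁).map Prod.fst)
      ((comCommit k₁ m₂).map Prod.fst) ≤ ENNReal.ofReal ε := fun m₁ m₂ => by
    rw [← ofReal_statDist]
    exact ENNReal.ofReal_le_ofReal (hCOM k₁ m₁ m₂)
  have hview : statEDist
      (selectiveOpeningView (comCommit k₁) (vcCommit k₂) (vcOpen k₂) M₁ I)
      (selectiveOpeningView (comCommit k₁) (vcCommit k₂) (vcOpen k₂) M₂ I)
      ≤ ENNReal.ofReal (n * ε) := by
    rw [selectiveOpeningView_eq_map_maskedView _ _ _ _ hI₁,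
      selectiveOpeningView_eq_map_maskedView _ _ _ _ hI₁, ENNReal.ofReal_mul n.cast_nonneg,
      ENNReal.ofReal_natCast]
    refine (statEDist_map_le _ _ _).trans ?_
    simpa [hM₁] using
      statEDist_pmfList_le (forall₂_statEDist_masked_le hc (hM₁.trans hM₂.symm) hMI)
  exact (statDist_le_of_statEDist_le_ofReal hview (by positivity)).trans
    (mul_le_mul_of_nonneg_right (Nat.cast_le.2 hn) hε)
end
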